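/- arXiv:2305.04680 — 2 statements merged into one kernel-verified Lean document; each statement's English description precedes it below -/
import Mathlib

section
/- Lower bound for the relative error: under the assumptions $0<m\le\|\mathbf{u}(\mu,t)\|\le M<\infty$ a.e., for any orthonormal-column matrix $\mathbf{V}\in\mathbb{R}^{N_h\times N}$, any measurable $\hat{\mathbf{q}}:\mathcal{D}\to\mathbb{R}^N$, and the optimal matrix $\mathbf{V}_\infty$ minimizing $\int_{\mathcal{D}}\|\mathbf{u}-\mathbf{W}\mathbf{W}^T\mathbf{u}\|^2$ over orthonormal-column $\mathbf{W}\in\mathbb{R}^{N_h\times N}$, one has $\mathcal{E}_R\ge\frac{m}{M}\cdot m^{-1}\left(\int_{\mathcal{D}}\|\mathbf{u}-\mathbf{V}_\infty\mathbf{V}_\infty^T\mathbf{u}\|^2\,d(\mu,t)\right)^{1/2}$, where $\mathcal{E}_R=\left(\int_{\mathcal{D}}\|\mathbf{u}-\mathbf{V}\hat{\mathbf{q}}\|^2/\|\mathbf{u}\|^2\right)^{1/2}$. -/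
open MeasureTheory Matrix

noncomputable def vnorm {n : ℕ} (v : Fin n → ℝ) : ℝ :=
  Real.sqrt (∑ i, (v i) ^ 2)

lemma vnorm_sq {n : ℕ} (v : Fin n → ℝ) : vnorm v ^ 2 = v ⬝ᵥ v := by
  rw [vnorm, Real.sq_sqrt (by positivity)]
  simp [dotProduct, sq]

lemma vnorm_nonneg {n : ℕ} (v : Fin n → ℝ) : 0 ≤ vnorm v := Real.sqrt_nonneg _

lemma proj_opt {Nh N : ℕ} (V : Matrix (Fin Nh) (Fin N) ℝ) (hV : Vᵀ * V = 1)
    (v : Fin Nh → ℝ) (q : Fin N → ℝ) :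
    vnorm (v - V.mulVec (Vᵀ.mulVec v)) ^ 2 ≤ vnorm (v - V.mulVec q) ^ 2 := by
  set e := v - V.mulVec (Vᵀ.mulVec v) with he
  set d := V.mulVec (Vᵀ.mulVec v - q) with hd
  have hsplit : v - V.mulVec q = e + d := by
    simp [he, hd, Matrix.mulVec_sub]
  have hperp : e ⬝ᵥ d = 0 := by
    rw [hd, Matrix.dotProduct_mulVec]
    have : Matrix.vecMul e V = 0 := by
      have : Vᵀ.mulVec e = 0 := by
        rw [he, Matrix.mulVec_sub, Matrix.mulVec_mulVec, Matrix.mulVec_mulVec,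
          hV, Matrix.one_mul, sub_self]
      rw [← Matrix.mulVec_transpose, this]
    rw [this, zero_dotProduct]
  rw [hsplit, vnorm_sq, vnorm_sq]
  have hdd : 0 ≤ d ⬝ᵥ d := by
    exact Finset.sum_nonneg fun i _ => mul_self_nonneg _
  have : (e + d) ⬝ᵥ (e + d) = e ⬝ᵥ e + 2 * (e ⬝ᵥ d) + d ⬝ᵥ d := by
    simp [add_dotProduct, dotProduct_add, dotProduct_comm d e]; ring
  rw [this, hperp]
  linarith

/-- lower bound for the relative error: if `0 < m ≤ ‖u‖ ≤ M` a.e.,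
`V` has orthonormal columns, `q̂` is any measurable coefficient map, and `V∞` is
the optimal orthonormal-column matrix (minimizing the continuous projection error),
then `𝓔_R ≥ (m/M) · m⁻¹ (∫ ‖u - V∞V∞ᵀu‖²)^{1/2}`. -/
theorem stmt_4 {D : Type*} [MeasurableSpace D] (μ : Measure D) [IsFiniteMeasure μ]
    {Nh N : ℕ} (u : D → Fin Nh → ℝ) (hu : Measurable u)
    (qhat : D → Fin N → ℝ) (hqhat : Measurable qhat)
    (V : Matrix (Fin Nh) (Fin N) ℝ) (hV : Vᵀ * V = 1)
    (Vinf : Matrix (Fin Nh) (Fin N) ℝ) (hVinf : Vinfᵀ * Vinf = 1)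
    (hopt : ∀ W : Matrix (Fin Nh) (Fin N) ℝ, Wᵀ * W = 1 →
      (∫ x, vnorm (u x - Vinf.mulVec (Vinfᵀ.mulVec (u x))) ^ 2 ∂μ) ≤
        ∫ x, vnorm (u x - W.mulVec (Wᵀ.mulVec (u x))) ^ 2 ∂μ)
    (m M : ℝ) (hm : 0 < m) (hM : 0 < M)
    (hbound : ∀ᵐ x ∂μ, m ≤ vnorm (u x) ∧ vnorm (u x) ≤ M)
    (hint : Integrable (fun x => vnorm (u x - V.mulVec (qhat x)) ^ 2 / vnorm (u x) ^ 2) μ)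
    (hint' : Integrable (fun x => vnorm (u x - Vinf.mulVec (Vinfᵀ.mulVec (u x))) ^ 2) μ) :
    Real.sqrt (∫ x, vnorm (u x - V.mulVec (qhat x)) ^ 2 / vnorm (u x) ^ 2 ∂μ) ≥
      (m / M) * (m⁻¹ *
        Real.sqrt (∫ x, vnorm (u x - Vinf.mulVec (Vinfᵀ.mulVec (u x))) ^ 2 ∂μ)) := by
  set I := ∫ x, vnorm (u x - V.mulVec (qhat x)) ^ 2 / vnorm (u x) ^ 2 ∂μ with hI
  set J := ∫ x, vnorm (u x - Vinf.mulVec (Vinfᵀ.mulVec (u x))) ^ 2 ∂μ with hJ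
  -- step 1: J ≤ ∫ ‖u - VVᵀu‖²
  have h1 : J ≤ ∫ x, vnorm (u x - V.mulVec (Vᵀ.mulVec (u x))) ^ 2 ∂μ := hopt V hV
  -- step 2: ∫ ‖u - VVᵀu‖² ≤ M² * I
  have h2 : (∫ x, vnorm (u x - V.mulVec (Vᵀ.mulVec (u x))) ^ 2 ∂μ) ≤ M ^ 2 * I := by
    rw [hI, ← integral_const_mul]
    apply integral_mono_of_nonneg
    · filter_upwards with x using by positivity
    · exact hint.const_mul _
    · filter_upwards [hbound] with x ⟨hxm, hxM⟩
      have hupos : 0 < vnorm (u x) := lt_of_lt_of_le hm hxm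
      have key : vnorm (u x - V.mulVec (qhat x)) ^ 2 =
          vnorm (u x - V.mulVec (qhat x)) ^ 2 / vnorm (u x) ^ 2 * vnorm (u x) ^ 2 := by
        field_simp
      calc vnorm (u x - V.mulVec (Vᵀ.mulVec (u x))) ^ 2
          ≤ vnorm (u x - V.mulVec (qhat x)) ^ 2 := proj_opt V hV _ _
        _ = vnorm (u x - V.mulVec (qhat x)) ^ 2 / vnorm (u x) ^ 2 * vnorm (u x) ^ 2 := key
        _ ≤ vnorm (u x - V.mulVec (qhat x)) ^ 2 / vnorm (u x) ^ 2 * M ^ 2 := by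
            apply mul_le_mul_of_nonneg_left _ (by positivity)
            exact pow_le_pow_left₀ hupos.le hxM 2
        _ = M ^ 2 * (vnorm (u x - V.mulVec (qhat x)) ^ 2 / vnorm (u x) ^ 2) := by ring
  have hJle : J ≤ M ^ 2 * I := le_trans h1 h2
  have hIne : 0 ≤ I := by
    apply integral_nonneg; intro x; positivity
  have hsq : Real.sqrt J ≤ M * Real.sqrt I := by
    have := Real.sqrt_le_sqrt hJle
    rwa [Real.sqrt_mul (by positivity), Real.sqrt_sq hM.le] at this
  have : m / M * (m⁻¹ * Real.sqrt J) = Real.sqrt J / M := by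
    field_simp
  rw [ge_iff_le, this, div_le_iff₀ hM]
  linarith [hsq]
end

section
/- Sampling error bound in expectation: under iid uniform sampling of $\mu_j$ and uniform time grid $t_i$, with $f(\mu,t)=\|\mathbf{u}(\mu,t)-\mathbf{V}\mathbf{V}^T\mathbf{u}(\mu,t)\|^2$ bounded, the sampling error $\mathcal{E}_S=m^{-1}\left|\int_{\mathcal{D}}f\,d(\mu,t)-\frac{|\mathcal{D}|}{N_sN_t}\sum_{i,j}f(\mu_j,t_i)\right|^{1/2}$ satisfies $\mathbb{E}[\mathcal{E}_S]\le C\left(N_s^{-1/4}+N_t^{-1/2}\right)$ for some constant $C$ independent of $N_s,N_t$. -/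
open MeasureTheory Matrix

lemma aux_L1_le_L2 {α : Type*} [MeasurableSpace α] (μ : Measure α) [IsProbabilityMeasure μ]
    (G : α → ℝ) (hG : AEStronglyMeasurable G μ) (h2 : Integrable (fun x => G x ^ 2) μ) :
    ∫ x, |G x| ∂μ ≤ Real.sqrt (∫ x, G x ^ 2 ∂μ) := by
  have habs : AEStronglyMeasurable (fun x => |G x|) μ := by
    simpa [Real.norm_eq_abs] using hG.norm
  have h1 : Integrable (fun x => |G x|) μ := by
    refine Integrable.mono' ((integrable_const 1).add h2) habs ?_
    filter_upwards with x
    simp only [Pi.add_apply, Real.norm_eq_abs, abs_abs]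
    nlinarith [sq_abs (G x), sq_nonneg (|G x| - 1)]
  set c := ∫ x, |G x| ∂μ with hc_def
  have hc : 0 ≤ c := integral_nonneg fun x => abs_nonneg _
  have h0 : 0 ≤ ∫ x, (|G x| - c) ^ 2 ∂μ := integral_nonneg fun x => sq_nonneg _
  have ia : Integrable (fun x => G x ^ 2 - 2 * c * |G x|) μ := h2.sub (h1.const_mul (2 * c))
  have hrw : (fun x => (|G x| - c) ^ 2) = fun x => (G x ^ 2 - 2 * c * |G x|) + c ^ 2 := by
    funext x
    nlinarith [sq_abs (G x)]
  have hexp : ∫ x, (|G x| - c) ^ 2 ∂μ = (∫ x, G x ^ 2 ∂μ) - c ^ 2 := by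
    rw [hrw, integral_add ia (integrable_const _),
      integral_sub h2 (h1.const_mul (2 * c)), integral_const_mul, integral_const]
    simp [← hc_def]
    ring
  have key : c ^ 2 ≤ ∫ x, G x ^ 2 ∂μ := by linarith
  exact (Real.le_sqrt hc (le_trans (sq_nonneg c) key)).mpr key

lemma aux_eval_mp {ι : Type*} [Fintype ι] {α : Type*} [MeasurableSpace α]
    (ν : Measure α) [IsProbabilityMeasure ν] (j : ι) :
    MeasurePreserving (fun ω : ι → α => ω j) (Measure.pi fun _ => ν) ν := by
  classical
  refine ⟨measurable_pi_apply j, ?_⟩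
  ext s hs
  rw [Measure.map_apply (measurable_pi_apply j) hs]
  have hpre : (fun ω : ι → α => ω j) ⁻¹' s
      = Set.pi Set.univ (Function.update (fun _ => Set.univ) j s) := by
    ext ω
    simp only [Set.mem_preimage, Set.mem_univ_pi, Function.update_apply]
    constructor
    · intro h i
      split_ifs with hi
      · subst hi; exact h
      · trivial
    · intro h; simpa using h j
  rw [hpre, Measure.pi_pi, Fintype.prod_eq_single j]
  · simp
  · intro i hi
    simp [Function.update_apply, hi]

lemma aux_pair_mp {ι : Type*} [Fintype ι] {α : Type*} [MeasurableSpace α]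
    (ν : Measure α) [IsProbabilityMeasure ν] {j k : ι} (hjk : j ≠ k) :
    MeasurePreserving (fun ω : ι → α => (ω j, ω k)) (Measure.pi fun _ => ν) (ν.prod ν) := by
  classical
  have hm : Measurable (fun ω : ι → α => (ω j, ω k)) :=
    (measurable_pi_apply j).prodMk (measurable_pi_apply k)
  refine ⟨hm, ?_⟩
  refine (Measure.prod_eq fun s t hs ht => ?_).symm
  rw [Measure.map_apply hm (hs.prod ht)]
  have hpre : (fun ω : ι → α => (ω j, ω k)) ⁻¹' (s ×ˢ t)
      = Set.pi Set.univ
        (Function.update (Function.update (fun _ => Set.univ) k t) j s) := by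
    ext ω
    simp only [Set.mem_preimage, Set.mem_prod, Set.mem_univ_pi, Function.update_apply]
    constructor
    · rintro ⟨h1, h2⟩ i
      split_ifs with hi hik
      · subst hi; exact h1
      · subst hik; exact h2
      · trivial
    · intro h
      refine ⟨?_, ?_⟩
      · have := h j; simpa using this
      · have := h k; simpa [hjk.symm] using this
  rw [hpre, Measure.pi_pi]
  have hg : ∀ i, ν (Function.update (Function.update (fun _ => Set.univ) k t) j s i)
      = if i = j then ν s else if i = k then ν t else 1 := by
    intro i
    simp only [Function.update_apply]
    split_ifs <;> simp
  rw [Finset.prod_congr rfl fun i _ => hg i,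
    ← Finset.mul_prod_erase Finset.univ _ (Finset.mem_univ j),
    ← Finset.mul_prod_erase _ _ (Finset.mem_erase.mpr ⟨hjk.symm, Finset.mem_univ k⟩)]
  rw [if_pos rfl, if_neg hjk.symm, if_pos rfl]
  rw [Finset.prod_eq_one, mul_one]
  intro i hi
  simp only [Finset.mem_erase] at hi
  rw [if_neg hi.2.1, if_neg hi.1]

lemma aux_quad (g : ℝ → ℝ) (T : ℝ) (hT : 0 < T) (K : NNReal)
    (hLip : LipschitzOnWith K g (Set.Icc 0 T)) (Nt : ℕ) (hNt : 1 ≤ Nt) :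
    |(∫ t in Set.Icc (0:ℝ) T, g t) - (T / Nt) * ∑ i ∈ Finset.Icc 1 Nt, g (i * T / Nt)|
      ≤ K * T ^ 2 / Nt := by
  have hNt0 : (0:ℝ) < Nt := by exact_mod_cast hNt
  have hNt' : (Nt:ℝ) ≠ 0 := ne_of_gt hNt0
  set δ : ℝ := T / Nt with hδ
  have hδ0 : 0 < δ := div_pos hT hNt0
  set a : ℕ → ℝ := fun i => i * δ with ha
  have haNt : a Nt = T := by simp only [ha, hδ]; field_simp
  have ha0 : a 0 = 0 := by simp [ha]
  have hamono : ∀ i : ℕ, a i ≤ a (i + 1) := by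
    intro i
    simp only [ha]
    have : (i : ℝ) ≤ (i : ℝ) + 1 := by linarith
    push_cast
    nlinarith
  have hmem : ∀ i : ℕ, i ≤ Nt → a i ∈ Set.Icc (0:ℝ) T := by
    intro i hi
    constructor
    · positivity
    · rw [← haNt]
      have : (i:ℝ) ≤ (Nt:ℝ) := by exact_mod_cast hi
      simp only [ha]
      nlinarith
  have hsub : ∀ i : ℕ, i < Nt → Set.uIcc (a i) (a (i+1)) ⊆ Set.Icc 0 T := by
    intro i hi
    rw [Set.uIcc_of_le (hamono i)]
    exact Set.Icc_subset_Icc (hmem i hi.le).1 (hmem (i+1) hi).2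
  have hcont : ContinuousOn g (Set.Icc 0 T) := hLip.continuousOn
  have hint : ∀ i < Nt, IntervalIntegrable g volume (a i) (a (i+1)) := fun i hi =>
    (hcont.mono (hsub i hi)).intervalIntegrable
  have h1 : (∫ t in Set.Icc (0:ℝ) T, g t) = ∑ i ∈ Finset.range Nt, ∫ t in a i..a (i+1), g t := by
    rw [integral_Icc_eq_integral_Ioc, intervalIntegral.sum_integral_adjacent_intervals hint,
      ha0, haNt, intervalIntegral.integral_of_le hT.le]
  have h2 : (T / Nt) * ∑ i ∈ Finset.Icc 1 Nt, g (i * T / Nt)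
      = ∑ i ∈ Finset.range Nt, δ * g (a (i+1)) := by
    rw [Finset.mul_sum, ← Finset.Ico_add_one_right_eq_Icc, Finset.sum_Ico_eq_sum_range]
    refine Finset.sum_congr rfl fun i _ => ?_
    have h4 : ((1 + i : ℕ) : ℝ) * T / Nt = (i + 1) * δ := by simp only [hδ]; push_cast; ring
    rw [h4, ← hδ]
    congr 1
    simp only [ha]
    push_cast
    ring
  rw [h1, h2, ← Finset.sum_sub_distrib]
  have hterm : ∀ i ∈ Finset.range Nt,
      |(∫ t in a i..a (i+1), g t) - δ * g (a (i+1))| ≤ (K * δ) * δ := by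
    intro i hi
    rw [Finset.mem_range] at hi
    have hconst : δ * g (a (i+1)) = ∫ t in a i..a (i+1), g (a (i+1)) := by
      rw [intervalIntegral.integral_const, smul_eq_mul]
      congr 1
      simp only [ha]
      push_cast
      ring
    rw [hconst, ← intervalIntegral.integral_sub (hint i hi)
      (intervalIntegrable_const)]
    have hb : ∀ x ∈ Set.uIoc (a i) (a (i+1)), ‖g x - g (a (i+1))‖ ≤ K * δ := by
      intro x hx
      rw [Set.uIoc_of_le (hamono i)] at hx
      have hxmem : x ∈ Set.Icc (0:ℝ) T :=
        (hsub i hi) (by rw [Set.uIcc_of_le (hamono i)]; exact Set.Ioc_subset_Icc_self hx)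
      have haim : a (i+1) ∈ Set.Icc (0:ℝ) T := hmem (i+1) hi
      have hd := hLip.dist_le_mul x hxmem (a (i+1)) haim
      rw [Real.dist_eq] at hd
      rw [Real.norm_eq_abs]
      refine hd.trans ?_
      have h3 : |x - a (i+1)| ≤ δ := by
        rw [abs_le]
        constructor
        · have : a (i+1) - a i = δ := by simp only [ha]; push_cast; ring
          linarith [hx.1, hx.2, this]
        · linarith [hx.2, hδ0.le]
      exact mul_le_mul_of_nonneg_left h3 (K.coe_nonneg)
    have := intervalIntegral.norm_integral_le_of_norm_le_const hb
    rw [Real.norm_eq_abs] at this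
    refine this.trans ?_
    have : |a (i+1) - a i| = δ := by
      rw [abs_of_nonneg (by linarith [hamono i])]
      simp only [ha]; push_cast; ring
    rw [this]
  calc |∑ i ∈ Finset.range Nt, ((∫ t in a i..a (i+1), g t) - δ * g (a (i+1)))|
      ≤ ∑ i ∈ Finset.range Nt, |(∫ t in a i..a (i+1), g t) - δ * g (a (i+1))| :=
        Finset.abs_sum_le_sum_abs _ _
    _ ≤ ∑ i ∈ Finset.range Nt, (K * δ) * δ := Finset.sum_le_sum hterm
    _ = Nt * ((K * δ) * δ) := by rw [Finset.sum_const, Finset.card_range]; ring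
    _ = K * T ^ 2 / Nt := by field_simp [hδ]; rw [hδ]; field_simp


lemma aux_sqrt_add (x y : ℝ) (hx : 0 ≤ x) (hy : 0 ≤ y) :
    Real.sqrt (x + y) ≤ Real.sqrt x + Real.sqrt y := by
  have h := Real.sqrt_le_sqrt (show x + y ≤ (Real.sqrt x + Real.sqrt y) ^ 2 by
    nlinarith [Real.sq_sqrt hx, Real.sq_sqrt hy, Real.sqrt_nonneg x, Real.sqrt_nonneg y])
  rwa [Real.sqrt_sq (by positivity)] at h

set_option maxHeartbeats 2000000 in
/-- sampling error bound in expectation: with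
`f(μ,t) = ‖u(μ,t) - VVᵀu(μ,t)‖²` continuous, bounded by `M²` and Lipschitz in `t`
uniformly in `μ`, iid uniform samples `μ_j` and uniform time grid `t_i = iT/N_t`,
the sampling error `𝓔_S = m⁻¹ |∫_𝒟 f - (|𝒟|/(N_sN_t)) ∑_{i,j} f(μ_j,t_i)|^{1/2}`
satisfies `𝔼[𝓔_S] ≤ C (N_s^{-1/4} + N_t^{-1/2})` with `C` independent of `N_s, N_t`. -/
theorem stmt_18 {p Nh N : ℕ} (P : Set (EuclideanSpace ℝ (Fin p)))
    (hPc : IsCompact P) (hPpos : 0 < volume P)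
    (T : ℝ) (hT : 0 < T)
    (u : EuclideanSpace ℝ (Fin p) → ℝ → Fin Nh → ℝ)
    (V : Matrix (Fin Nh) (Fin N) ℝ) (hV : Vᵀ * V = 1)
    (f : EuclideanSpace ℝ (Fin p) → ℝ → ℝ)
    (hfdef : ∀ μm t, f μm t = vnorm (u μm t - V.mulVec (Vᵀ.mulVec (u μm t))) ^ 2)
    (hf : ContinuousOn (fun z : EuclideanSpace ℝ (Fin p) × ℝ => f z.1 z.2)
      (P ×ˢ Set.Icc 0 T))
    (K : NNReal) (hLip : ∀ μm ∈ P, LipschitzOnWith K (f μm) (Set.Icc 0 T))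
    (M : ℝ) (hbd : ∀ μm ∈ P, ∀ t ∈ Set.Icc (0 : ℝ) T, f μm t ≤ M ^ 2)
    (m : ℝ) (hm : 0 < m) :
    ∃ C : ℝ, ∀ Ns Nt : ℕ, 1 ≤ Ns → 1 ≤ Nt →
      (∫ ω : Fin Ns → EuclideanSpace ℝ (Fin p),
          m⁻¹ * Real.sqrt
            |(∫ μm in P, ∫ t in Set.Icc (0 : ℝ) T, f μm t) -
              ((volume P).toReal * T / (Ns * Nt)) *
                ∑ i ∈ Finset.Icc 1 Nt, ∑ j : Fin Ns, f (ω j) (i * T / Nt)|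
        ∂(Measure.pi fun _ : Fin Ns => (volume P)⁻¹ • volume.restrict P)) ≤
      C * ((Ns : ℝ) ^ (-(1/4 : ℝ)) + (Nt : ℝ) ^ (-(1/2 : ℝ))) := by
  classical
  have hPmeas : MeasurableSet P := hPc.isClosed.measurableSet
  have hPfin : volume P ≠ ⊤ := hPc.measure_lt_top.ne
  set vol : ℝ := (volume P).toReal with hvol_def
  have hvol : 0 < vol := ENNReal.toReal_pos hPpos.ne' hPfin
  set ν : Measure (EuclideanSpace ℝ (Fin p)) := (volume P)⁻¹ • volume.restrict P with hν_def
  haveI hνprob : IsProbabilityMeasure ν := by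
    constructor
    rw [hν_def, Measure.smul_apply, Measure.restrict_apply_univ, smul_eq_mul]
    exact ENNReal.inv_mul_cancel hPpos.ne' hPfin
  have hνPc : ν Pᶜ = 0 := by
    rw [hν_def, Measure.smul_apply, Measure.restrict_apply hPmeas.compl]
    simp
  have hνP : ∀ᵐ x ∂ν, x ∈ P := by
    rw [MeasureTheory.ae_iff]
    exact hνPc
  have hf0 : ∀ x t, 0 ≤ f x t := fun x t => by rw [hfdef]; exact sq_nonneg _
  have hM2 : (0:ℝ) ≤ M ^ 2 := sq_nonneg M
  set B : ℝ := T * M ^ 2 with hB_def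
  have hB : 0 ≤ B := mul_nonneg hT.le hM2
  -- measurability of slices
  have hgm0 : ∀ t ∈ Set.Icc (0:ℝ) T,
      AEStronglyMeasurable (fun x => f x t) (volume.restrict P) := by
    intro t ht
    have hc2 : ContinuousOn (fun x => f x t) P := by
      have : ContinuousOn (fun x : EuclideanSpace ℝ (Fin p) =>
          (fun z : EuclideanSpace ℝ (Fin p) × ℝ => f z.1 z.2) (x, t)) P :=
        hf.comp (Continuous.continuousOn (continuous_id.prodMk continuous_const))
          (fun x hx => ⟨hx, ht⟩)
      exact this
    exact hc2.aestronglyMeasurable hPmeas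
  have hgm : ∀ t ∈ Set.Icc (0:ℝ) T, AEStronglyMeasurable (fun x => f x t) ν := by
    intro t ht
    rw [hν_def]
    exact (hgm0 t ht).smul_measure _
  -- choose the constant
  refine ⟨m⁻¹ * (Real.sqrt (vol * K * T ^ 2) + Real.sqrt vol * Real.sqrt B), ?_⟩
  intro Ns Nt hNs hNt
  have hNs0 : (0:ℝ) < Ns := by exact_mod_cast hNs
  have hNt0 : (0:ℝ) < Nt := by exact_mod_cast hNt
  have hNs' : (Ns:ℝ) ≠ 0 := ne_of_gt hNs0
  have hNt' : (Nt:ℝ) ≠ 0 := ne_of_gt hNt0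
  set mP : Measure (Fin Ns → EuclideanSpace ℝ (Fin p)) := Measure.pi fun _ => ν with hmP_def
  haveI : IsProbabilityMeasure mP := by rw [hmP_def]; infer_instance
  -- grid points lie in [0,T]
  have htmem : ∀ i ∈ Finset.Icc 1 Nt, ((i:ℝ) * T / Nt) ∈ Set.Icc (0:ℝ) T := by
    intro i hi
    rw [Finset.mem_Icc] at hi
    have h1 : (1:ℝ) ≤ i := by exact_mod_cast hi.1
    have h2 : (i:ℝ) ≤ Nt := by exact_mod_cast hi.2
    constructor
    · positivity
    · rw [div_le_iff₀ hNt0]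
      nlinarith
  -- the time-average function Y
  set Y : EuclideanSpace ℝ (Fin p) → ℝ :=
    fun x => (T / Nt) * ∑ i ∈ Finset.Icc 1 Nt, f x (i * T / Nt) with hY_def
  have hYm : AEStronglyMeasurable Y ν := by
    refine AEStronglyMeasurable.const_mul ?_ _
    exact Finset.aestronglyMeasurable_fun_sum _ (fun i hi => hgm _ (htmem i hi))
  have hYbd : ∀ x ∈ P, Y x ∈ Set.Icc 0 B := by
    intro x hx
    constructor
    · have : 0 ≤ ∑ i ∈ Finset.Icc 1 Nt, f x (i * T / Nt) :=
        Finset.sum_nonneg fun i _ => hf0 x _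
      have hTd : 0 ≤ T / Nt := by positivity
      exact mul_nonneg hTd this
    · have hsum : ∑ i ∈ Finset.Icc 1 Nt, f x (i * T / Nt) ≤ Nt * M ^ 2 := by
        calc ∑ i ∈ Finset.Icc 1 Nt, f x (i * T / Nt)
            ≤ ∑ i ∈ Finset.Icc 1 Nt, M ^ 2 :=
              Finset.sum_le_sum fun i hi => hbd x hx _ (htmem i hi)
          _ = Nt * M ^ 2 := by
              rw [Finset.sum_const, Nat.card_Icc]
              simp [nsmul_eq_mul]
      have hTd : 0 ≤ T / Nt := by positivity
      calc Y x ≤ (T / Nt) * (Nt * M ^ 2) := by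
            rw [hY_def]; exact mul_le_mul_of_nonneg_left hsum hTd
        _ = B := by rw [hB_def]; field_simp
  have hYaebd : ∀ᵐ x ∂ν, ‖Y x‖ ≤ B := by
    filter_upwards [hνP] with x hx
    rw [Real.norm_eq_abs, abs_of_nonneg (hYbd x hx).1]
    exact (hYbd x hx).2
  have hYint : Integrable Y ν := Integrable.mono' (integrable_const B) hYm hYaebd
  set a : ℝ := ∫ x, Y x ∂ν with ha_def
  have ha0 : 0 ≤ a := integral_nonneg_of_ae (hνP.mono fun x hx => (hYbd x hx).1)
  have haB : a ≤ B := by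
    have := norm_integral_le_of_norm_le_const hYaebd (f := Y) (μ := ν)
    rw [probReal_univ] at this
    simp only [ENNReal.toReal_one, mul_one] at this
    calc a ≤ ‖a‖ := le_abs_self a
      _ ≤ B := this
  -- centered variable
  set Z : EuclideanSpace ℝ (Fin p) → ℝ := fun x => Y x - a with hZ_def
  have hZm : AEStronglyMeasurable Z ν := hYm.sub aestronglyMeasurable_const
  have hZaebd : ∀ᵐ x ∂ν, ‖Z x‖ ≤ B := by
    filter_upwards [hνP] with x hx
    rw [Real.norm_eq_abs, hZ_def, abs_sub_le_iff]
    constructor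
    · linarith [(hYbd x hx).2, ha0]
    · linarith [(hYbd x hx).1, haB]
  have hZint : Integrable Z ν := Integrable.mono' (integrable_const B) hZm hZaebd
  have hZ0 : ∫ x, Z x ∂ν = 0 := by
    rw [hZ_def]
    rw [integral_sub hYint (integrable_const a), integral_const, probReal_univ]
    simp [← ha_def]
  have hZ2m : AEStronglyMeasurable (fun x => Z x ^ 2) ν := by
    exact (hZm.mul hZm).congr (ae_of_all _ fun x => by simp [sq])
  have hZ2aebd : ∀ᵐ x ∂ν, ‖Z x ^ 2‖ ≤ B ^ 2 := by
    filter_upwards [hZaebd] with x hx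
    rw [Real.norm_eq_abs, abs_pow, ← Real.norm_eq_abs]
    exact pow_le_pow_left₀ (norm_nonneg _) hx 2
  have hZ2int : Integrable (fun x => Z x ^ 2) ν :=
    Integrable.mono' (integrable_const (B ^ 2)) hZ2m hZ2aebd
  have hZ2le : ∫ x, Z x ^ 2 ∂ν ≤ B ^ 2 := by
    have h := integral_mono_ae hZ2int (integrable_const (B ^ 2))
      (hZ2aebd.mono fun x hx => by
        rw [Real.norm_eq_abs, abs_of_nonneg (sq_nonneg _)] at hx; exact hx)
    rwa [integral_const, probReal_univ, smul_eq_mul, one_mul] at h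
  -- coordinate evaluations
  have hev : ∀ j : Fin Ns, MeasurePreserving (fun ω : Fin Ns → EuclideanSpace ℝ (Fin p) => ω j)
      mP ν := fun j => aux_eval_mp ν j
  have hPall : ∀ᵐ ω ∂mP, ∀ j, ω j ∈ P := by
    rw [ae_all_iff]
    intro j
    rw [MeasureTheory.ae_iff]
    have : {ω : Fin Ns → EuclideanSpace ℝ (Fin p) | ¬ ω j ∈ P}
        = Function.eval j ⁻¹' Pᶜ := by ext ω; simp [Function.eval]
    rw [this, hmP_def]
    exact Measure.pi_eval_preimage_null _ hνPc
  have hZj : ∀ j : Fin Ns, AEStronglyMeasurable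
      (fun ω : Fin Ns → EuclideanSpace ℝ (Fin p) => Z (ω j)) mP :=
    fun j => hZm.comp_measurePreserving (hev j)
  -- second moment of the Monte-Carlo error
  set W : (Fin Ns → EuclideanSpace ℝ (Fin p)) → ℝ :=
    fun ω => (Ns:ℝ)⁻¹ * ∑ j, Z (ω j) with hW_def
  have hWm : AEStronglyMeasurable W mP :=
    (Finset.aestronglyMeasurable_fun_sum _ fun j _ => hZj j).const_mul _
  have hWaebd : ∀ᵐ ω ∂mP, |W ω| ≤ B := by
    filter_upwards [hPall] with ω hω
    rw [hW_def]
    have hsum : |∑ j, Z (ω j)| ≤ Ns * B := by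
      calc |∑ j : Fin Ns, Z (ω j)| ≤ ∑ j : Fin Ns, |Z (ω j)| :=
            Finset.abs_sum_le_sum_abs _ _
        _ ≤ ∑ j : Fin Ns, B := Finset.sum_le_sum fun j _ => by
            have : ω j ∈ P := hω j
            have h1 := (hYbd _ this).1
            have h2 := (hYbd _ this).2
            rw [hZ_def, abs_sub_le_iff]
            constructor <;> [linarith; linarith]
        _ = Ns * B := by simp [Finset.sum_const, nsmul_eq_mul]
    rw [abs_mul, abs_inv, Nat.abs_cast]
    rw [inv_mul_le_iff₀ hNs0]
    linarith [hsum]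
  -- product integrals
  have hprodint : ∀ j k : Fin Ns, Integrable
      (fun ω : Fin Ns → EuclideanSpace ℝ (Fin p) => Z (ω j) * Z (ω k)) mP := by
    intro j k
    refine Integrable.mono' (integrable_const (B * B)) ((hZj j).mul (hZj k)) ?_
    filter_upwards [hPall] with ω hω
    rw [Real.norm_eq_abs, abs_mul]
    have hb : ∀ l : Fin Ns, |Z (ω l)| ≤ B := by
      intro l
      have h1 := (hYbd _ (hω l)).1
      have h2 := (hYbd _ (hω l)).2
      rw [hZ_def, abs_sub_le_iff]
      constructor <;> [linarith; linarith]
    exact mul_le_mul (hb j) (hb k) (abs_nonneg _) hB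
  have hprodeq : ∀ j k : Fin Ns, j ≠ k →
      ∫ ω, Z (ω j) * Z (ω k) ∂mP = 0 := by
    intro j k hjk
    have hmp := aux_pair_mp ν hjk
    have hmeas2 : AEStronglyMeasurable
        (fun z : EuclideanSpace ℝ (Fin p) × EuclideanSpace ℝ (Fin p) => Z z.1 * Z z.2)
        (ν.prod ν) := by
      exact (hZm.comp_quasiMeasurePreserving
          (Measure.quasiMeasurePreserving_fst (μ := ν) (ν := ν))).mul
        (hZm.comp_quasiMeasurePreserving
          (Measure.quasiMeasurePreserving_snd (μ := ν) (ν := ν)))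
    have : ∫ ω, Z (ω j) * Z (ω k) ∂mP
        = ∫ z : EuclideanSpace ℝ (Fin p) × EuclideanSpace ℝ (Fin p), Z z.1 * Z z.2 ∂(ν.prod ν) := by
      rw [← hmp.map_eq, integral_map hmp.measurable.aemeasurable (by rwa [hmp.map_eq])]
    rw [this, integral_prod_mul, hZ0, mul_zero]
  have hdiag : ∀ j : Fin Ns, ∫ ω, Z (ω j) * Z (ω j) ∂mP = ∫ x, Z x ^ 2 ∂ν := by
    intro j
    have : ∫ x, Z x ^ 2 ∂ν = ∫ ω, Z (ω j) ^ 2 ∂mP := by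
      rw [← (hev j).map_eq, integral_map (hev j).measurable.aemeasurable
        (by rw [(hev j).map_eq]; exact hZ2m)]
    simp_rw [← sq]
    exact this.symm
  have hW2int : Integrable (fun ω => W ω ^ 2) mP := by
    have : (fun ω => W ω ^ 2) = fun ω => (Ns:ℝ)⁻¹ ^ 2 * ((∑ j, Z (ω j)) * (∑ k, Z (ω k))) := by
      funext ω; rw [hW_def]; ring
    rw [this]
    refine Integrable.const_mul ?_ _
    simp_rw [Finset.sum_mul_sum]
    exact integrable_finset_sum _ fun j _ => integrable_finset_sum _ fun k _ => hprodint j k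
  have hW2 : ∫ ω, W ω ^ 2 ∂mP ≤ B ^ 2 / Ns := by
    have hrw : (fun ω => W ω ^ 2)
        = fun ω => (Ns:ℝ)⁻¹ ^ 2 * ∑ j, ∑ k, Z (ω j) * Z (ω k) := by
      funext ω; rw [hW_def, ← Finset.sum_mul_sum]; ring
    rw [hrw, integral_const_mul, integral_finset_sum _
      (fun j _ => integrable_finset_sum _ fun k _ => hprodint j k)]
    have hinner : ∀ j : Fin Ns, (∫ ω, (∑ k, Z (ω j) * Z (ω k)) ∂mP)
        = ∫ x, Z x ^ 2 ∂ν := by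
      intro j
      rw [integral_finset_sum _ (fun k _ => hprodint j k)]
      rw [Finset.sum_eq_single j]
      · exact hdiag j
      · intro k _ hkj
        exact hprodeq j k (Ne.symm hkj)
      · intro h; exact absurd (Finset.mem_univ j) h
    rw [Finset.sum_congr rfl fun j _ => hinner j,
      Finset.sum_const, Finset.card_univ, Fintype.card_fin]
    have hV0 : 0 ≤ ∫ x, Z x ^ 2 ∂ν := integral_nonneg fun x => sq_nonneg _
    have heq : ((Ns:ℝ)⁻¹) ^ 2 * (Ns • (∫ x, Z x ^ 2 ∂ν)) = (∫ x, Z x ^ 2 ∂ν) / Ns := by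
      rw [nsmul_eq_mul]; field_simp
    rw [heq]
    gcongr
  -- Jensen / Cauchy-Schwarz steps
  have hsqWm : AEStronglyMeasurable (fun ω => Real.sqrt |W ω|) mP := by
    have habs : AEStronglyMeasurable (fun ω => |W ω|) mP := by
      simpa [Real.norm_eq_abs] using hWm.norm
    exact Real.continuous_sqrt.comp_aestronglyMeasurable habs
  have hWint : Integrable W mP := Integrable.mono' (integrable_const B) hWm
    (hWaebd.mono fun ω h => by rwa [Real.norm_eq_abs])
  have habsWint : Integrable (fun ω => |W ω|) mP := hWint.abs
  have step2 : ∫ ω, |W ω| ∂mP ≤ Real.sqrt (∫ ω, W ω ^ 2 ∂mP) :=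
    aux_L1_le_L2 mP W hWm hW2int
  have step1 : ∫ ω, Real.sqrt |W ω| ∂mP ≤ Real.sqrt (∫ ω, |W ω| ∂mP) := by
    have hint2 : Integrable (fun ω => (Real.sqrt |W ω|) ^ 2) mP := by
      have e2 : (fun ω => (Real.sqrt |W ω|) ^ 2) = fun ω => |W ω| :=
        funext fun ω => Real.sq_sqrt (abs_nonneg _)
      rw [e2]; exact habsWint
    have h := aux_L1_le_L2 mP (fun ω => Real.sqrt |W ω|) hsqWm hint2
    have e1 : ∀ ω : Fin Ns → EuclideanSpace ℝ (Fin p),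
        abs (Real.sqrt (abs (W ω))) = Real.sqrt (abs (W ω)) :=
      fun ω => abs_of_nonneg (Real.sqrt_nonneg _)
    have e2 : ∀ ω : Fin Ns → EuclideanSpace ℝ (Fin p),
        (Real.sqrt (abs (W ω))) ^ 2 = abs (W ω) := fun ω => Real.sq_sqrt (abs_nonneg _)
    simp only [e1, e2] at h
    exact h
  have hIW : 0 ≤ ∫ ω, |W ω| ∂mP := integral_nonneg fun ω => abs_nonneg _
  have hMC : ∫ ω, Real.sqrt |W ω| ∂mP ≤ Real.sqrt B * (Ns:ℝ) ^ (-(1/4:ℝ)) := by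
    have h3 : Real.sqrt (∫ ω, |W ω| ∂mP) ≤ Real.sqrt (Real.sqrt (B ^ 2 / Ns)) :=
      Real.sqrt_le_sqrt (step2.trans (Real.sqrt_le_sqrt hW2))
    have hfinal : Real.sqrt (Real.sqrt (B ^ 2 / Ns)) = Real.sqrt B * (Ns:ℝ) ^ (-(1/4:ℝ)) := by
      rw [show B ^ 2 / (Ns:ℝ) = B ^ 2 * (Ns:ℝ)⁻¹ by ring,
        Real.sqrt_mul (sq_nonneg B), Real.sqrt_sq hB, Real.sqrt_mul hB]
      congr 1
      rw [Real.sqrt_inv, Real.sqrt_inv]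
      have h4 : Real.sqrt (Real.sqrt (Ns:ℝ)) = (Ns:ℝ) ^ ((1:ℝ)/4) := by
        rw [Real.sqrt_eq_rpow, Real.sqrt_eq_rpow,
          ← Real.rpow_mul (Nat.cast_nonneg Ns)]
        norm_num
      rw [h4, ← Real.rpow_neg (Nat.cast_nonneg Ns)]
    rw [← hfinal]
    exact step1.trans h3
  -- quadrature part
  set F : EuclideanSpace ℝ (Fin p) → ℝ := fun x => ∫ t in Set.Icc (0:ℝ) T, f x t with hF_def
  have hquad : ∀ x ∈ P, |F x - Y x| ≤ K * T ^ 2 / Nt := by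
    intro x hx
    exact aux_quad (f x) T hT K (hLip x hx) Nt hNt
  haveI hfinP : IsFiniteMeasure (volume.restrict P) :=
    ⟨by rw [Measure.restrict_apply_univ]; exact hPc.measure_lt_top⟩
  haveI hfinT : IsFiniteMeasure (volume.restrict (Set.Icc (0:ℝ) T)) :=
    ⟨by rw [Measure.restrict_apply_univ]; exact measure_Icc_lt_top⟩
  have hFm : AEStronglyMeasurable F (volume.restrict P) := by
    have hprod : AEStronglyMeasurable (fun z : EuclideanSpace ℝ (Fin p) × ℝ => f z.1 z.2)
        ((volume.restrict P).prod (volume.restrict (Set.Icc 0 T))) := by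
      rw [Measure.prod_restrict]
      exact hf.aestronglyMeasurable (hPmeas.prod measurableSet_Icc)
    exact hprod.integral_prod_right'
  have hFbd : ∀ x ∈ P, ‖F x‖ ≤ M ^ 2 * T := by
    intro x hx
    have hb : ∀ᵐ t ∂(volume.restrict (Set.Icc (0:ℝ) T)), ‖f x t‖ ≤ M ^ 2 := by
      filter_upwards [ae_restrict_mem measurableSet_Icc] with t ht
      rw [Real.norm_eq_abs, abs_of_nonneg (hf0 x t)]
      exact hbd x hx t ht
    have h := norm_integral_le_of_norm_le_const hb
    rw [measureReal_restrict_apply_univ] at h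
    calc ‖F x‖ ≤ M ^ 2 * (volume (Set.Icc (0:ℝ) T)).toReal := h
      _ = M ^ 2 * T := by
          rw [Real.volume_Icc, sub_zero, ENNReal.toReal_ofReal hT.le]
  have hFint : Integrable F (volume.restrict P) :=
    Integrable.mono' (integrable_const (M ^ 2 * T)) hFm
      ((ae_restrict_mem hPmeas).mono fun x hx => hFbd x hx)
  have hYm' : AEStronglyMeasurable Y (volume.restrict P) :=
    AEStronglyMeasurable.const_mul
      (Finset.aestronglyMeasurable_fun_sum _ (fun i hi => hgm0 _ (htmem i hi))) _
  have hYint' : Integrable Y (volume.restrict P) :=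
    Integrable.mono' (integrable_const B) hYm'
      ((ae_restrict_mem hPmeas).mono fun x hx => by
        rw [Real.norm_eq_abs, abs_of_nonneg (hYbd x hx).1]; exact (hYbd x hx).2)
  set I : ℝ := ∫ x in P, F x with hI_def
  have hvola : vol * a = ∫ x in P, Y x := by
    rw [ha_def, hν_def, integral_smul_measure, ENNReal.toReal_inv, smul_eq_mul, ← hvol_def]
    field_simp
  have hQ : |I - vol * a| ≤ vol * ((K:ℝ) * T ^ 2 / Nt) := by
    rw [hvola, hI_def, ← integral_sub hFint hYint']
    have hb : ∀ᵐ x ∂(volume.restrict P), ‖F x - Y x‖ ≤ (K:ℝ) * T ^ 2 / Nt :=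
      (ae_restrict_mem hPmeas).mono fun x hx => by
        rw [Real.norm_eq_abs]; exact hquad x hx
    have h := norm_integral_le_of_norm_le_const hb
    rw [measureReal_restrict_apply_univ] at h
    rw [← Real.norm_eq_abs]
    calc ‖∫ x in P, (F x - Y x)‖ ≤ ((K:ℝ) * T ^ 2 / Nt) * vol := h
      _ = vol * ((K:ℝ) * T ^ 2 / Nt) := mul_comm _ _
  -- relating the sampled sum to W
  set G : (Fin Ns → EuclideanSpace ℝ (Fin p)) → ℝ :=
    fun ω => ∑ i ∈ Finset.Icc 1 Nt, ∑ j : Fin Ns, f (ω j) (i * T / Nt) with hG_def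
  have hEeq : ∀ ω : Fin Ns → EuclideanSpace ℝ (Fin p),
      (vol * T / (Ns * Nt)) * G ω = vol * ((Ns:ℝ)⁻¹ * ∑ j, Y (ω j)) := by
    intro ω
    have hsw : ∑ j : Fin Ns, Y (ω j)
        = (T / Nt) * ∑ i ∈ Finset.Icc 1 Nt, ∑ j : Fin Ns, f (ω j) (i * T / Nt) := by
      simp only [hY_def]
      rw [← Finset.mul_sum, Finset.sum_comm]
    rw [hsw, hG_def]
    field_simp
  have hWrel : ∀ ω : Fin Ns → EuclideanSpace ℝ (Fin p),
      vol * ((Ns:ℝ)⁻¹ * ∑ j, Y (ω j)) - vol * a = vol * W ω := by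
    intro ω
    simp only [hW_def, hZ_def]
    rw [Finset.sum_sub_distrib, Finset.sum_const, Finset.card_univ, Fintype.card_fin,
      nsmul_eq_mul]
    field_simp
  have hGm : AEStronglyMeasurable G mP := by
    rw [hG_def]
    refine Finset.aestronglyMeasurable_fun_sum _ fun i hi => ?_
    refine Finset.aestronglyMeasurable_fun_sum _ fun j _ => ?_
    exact (hgm _ (htmem i hi)).comp_measurePreserving (hev j)
  have hintm : AEStronglyMeasurable
      (fun ω => m⁻¹ * Real.sqrt |I - (vol * T / (Ns * Nt)) * G ω|) mP := by
    have hc1 : Continuous (fun x : ℝ => I - (vol * T / (Ns * Nt)) * x) :=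
      continuous_const.sub (continuous_const.mul continuous_id)
    have hcont : Continuous (fun x : ℝ => m⁻¹ * Real.sqrt |I - (vol * T / (Ns * Nt)) * x|) :=
      continuous_const.mul (Real.continuous_sqrt.comp (continuous_abs.comp hc1))
    exact hcont.comp_aestronglyMeasurable hGm
  have hGbd : ∀ᵐ ω ∂mP, |(vol * T / (Ns * Nt)) * G ω| ≤ vol * B := by
    filter_upwards [hPall] with ω hω
    rw [hEeq ω, abs_mul, abs_of_nonneg hvol.le]
    refine mul_le_mul_of_nonneg_left ?_ hvol.le
    rw [abs_mul, abs_inv, Nat.abs_cast, inv_mul_le_iff₀ hNs0]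
    have hs2 : |∑ j, Y (ω j)| ≤ Ns * B := by
      calc |∑ j, Y (ω j)| ≤ ∑ j : Fin Ns, |Y (ω j)| := Finset.abs_sum_le_sum_abs _ _
        _ ≤ ∑ j : Fin Ns, B := Finset.sum_le_sum fun j _ => by
            rw [abs_of_nonneg (hYbd _ (hω j)).1]; exact (hYbd _ (hω j)).2
        _ = Ns * B := by simp [Finset.sum_const, nsmul_eq_mul]
    linarith
  have hLHSint : Integrable (fun ω => m⁻¹ * Real.sqrt |I - (vol * T / (Ns * Nt)) * G ω|) mP := by
    refine Integrable.mono' (integrable_const (m⁻¹ * Real.sqrt (|I| + vol * B))) hintm ?_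
    filter_upwards [hGbd] with ω hb
    rw [Real.norm_eq_abs, abs_of_nonneg (by positivity)]
    refine mul_le_mul_of_nonneg_left (Real.sqrt_le_sqrt ?_) (inv_nonneg.mpr hm.le)
    calc |I - (vol * T / (Ns * Nt)) * G ω| ≤ |I| + |(vol * T / (Ns * Nt)) * G ω| :=
          abs_sub _ _
      _ ≤ |I| + vol * B := add_le_add_right hb _
  have hsqWint : Integrable (fun ω => Real.sqrt |W ω|) mP := by
    refine Integrable.mono' (integrable_const (Real.sqrt B)) hsqWm ?_
    filter_upwards [hWaebd] with ω h
    rw [Real.norm_eq_abs, abs_of_nonneg (Real.sqrt_nonneg _)]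
    exact Real.sqrt_le_sqrt h
  have hRHSint : Integrable (fun ω =>
      m⁻¹ * Real.sqrt (vol * ((K:ℝ) * T ^ 2 / Nt))
        + (m⁻¹ * Real.sqrt vol) * Real.sqrt |W ω|) mP :=
    (integrable_const _).add (hsqWint.const_mul _)
  have hpt : ∀ᵐ ω ∂mP, m⁻¹ * Real.sqrt |I - (vol * T / (Ns * Nt)) * G ω|
      ≤ m⁻¹ * Real.sqrt (vol * ((K:ℝ) * T ^ 2 / Nt))
        + (m⁻¹ * Real.sqrt vol) * Real.sqrt |W ω| := by
    filter_upwards with ω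
    have h2 : vol * a - (vol * T / (Ns * Nt)) * G ω = -(vol * W ω) := by
      rw [hEeq ω]
      have := hWrel ω
      linarith
    have h1 : |I - (vol * T / (Ns * Nt)) * G ω|
        ≤ vol * ((K:ℝ) * T ^ 2 / Nt) + vol * |W ω| := by
      have hsplit : I - (vol * T / (Ns * Nt)) * G ω
          = (I - vol * a) + (vol * a - (vol * T / (Ns * Nt)) * G ω) := by ring
      rw [hsplit]
      refine (abs_add_le _ _).trans (add_le_add hQ ?_)
      rw [h2, abs_neg, abs_mul, abs_of_nonneg hvol.le]
    have hKT : (0:ℝ) ≤ vol * ((K:ℝ) * T ^ 2 / Nt) := by positivity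
    calc m⁻¹ * Real.sqrt |I - (vol * T / (Ns * Nt)) * G ω|
        ≤ m⁻¹ * Real.sqrt (vol * ((K:ℝ) * T ^ 2 / Nt) + vol * |W ω|) :=
          mul_le_mul_of_nonneg_left (Real.sqrt_le_sqrt h1) (inv_nonneg.mpr hm.le)
      _ ≤ m⁻¹ * (Real.sqrt (vol * ((K:ℝ) * T ^ 2 / Nt)) + Real.sqrt (vol * |W ω|)) :=
          mul_le_mul_of_nonneg_left
            (aux_sqrt_add _ _ hKT (by positivity)) (inv_nonneg.mpr hm.le)
      _ = m⁻¹ * Real.sqrt (vol * ((K:ℝ) * T ^ 2 / Nt))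
            + (m⁻¹ * Real.sqrt vol) * Real.sqrt |W ω| := by
          rw [Real.sqrt_mul hvol.le (abs (W ω))]; ring
  -- final chain
  have hmain : (∫ ω, m⁻¹ * Real.sqrt |I - (vol * T / (Ns * Nt)) * G ω| ∂mP)
      ≤ m⁻¹ * Real.sqrt (vol * ((K:ℝ) * T ^ 2 / Nt))
        + (m⁻¹ * Real.sqrt vol) * (Real.sqrt B * (Ns:ℝ) ^ (-(1/4:ℝ))) := by
    calc (∫ ω, m⁻¹ * Real.sqrt |I - (vol * T / (Ns * Nt)) * G ω| ∂mP)
        ≤ ∫ ω, (m⁻¹ * Real.sqrt (vol * ((K:ℝ) * T ^ 2 / Nt))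
            + (m⁻¹ * Real.sqrt vol) * Real.sqrt |W ω|) ∂mP :=
          integral_mono_ae hLHSint hRHSint hpt
      _ = m⁻¹ * Real.sqrt (vol * ((K:ℝ) * T ^ 2 / Nt))
            + (m⁻¹ * Real.sqrt vol) * ∫ ω, Real.sqrt |W ω| ∂mP := by
          rw [integral_add (integrable_const _) (hsqWint.const_mul _),
            integral_const, integral_const_mul, probReal_univ]
          simp
      _ ≤ m⁻¹ * Real.sqrt (vol * ((K:ℝ) * T ^ 2 / Nt))
            + (m⁻¹ * Real.sqrt vol) * (Real.sqrt B * (Ns:ℝ) ^ (-(1/4:ℝ))) := by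
          refine add_le_add_right (mul_le_mul_of_nonneg_left hMC (by positivity)) _
  have hsplitKT : Real.sqrt (vol * ((K:ℝ) * T ^ 2 / Nt))
      = Real.sqrt (vol * (K:ℝ) * T ^ 2) * (Nt:ℝ) ^ (-(1/2:ℝ)) := by
    rw [show vol * ((K:ℝ) * T ^ 2 / Nt) = (vol * (K:ℝ) * T ^ 2) * ((Nt:ℝ))⁻¹ by ring,
      Real.sqrt_mul (by positivity), Real.sqrt_inv]
    congr 1
    rw [Real.sqrt_eq_rpow, ← Real.rpow_neg (Nat.cast_nonneg Nt)]
  have hrp1 : (0:ℝ) ≤ (Ns:ℝ) ^ (-(1/4:ℝ)) := Real.rpow_nonneg (Nat.cast_nonneg Ns) _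
  have hrp2 : (0:ℝ) ≤ (Nt:ℝ) ^ (-(1/2:ℝ)) := Real.rpow_nonneg (Nat.cast_nonneg Nt) _
  have hA1 : (0:ℝ) ≤ m⁻¹ * Real.sqrt (vol * (K:ℝ) * T ^ 2) := by positivity
  have hA2 : (0:ℝ) ≤ m⁻¹ * Real.sqrt vol * Real.sqrt B := by positivity
  have hnum : m⁻¹ * Real.sqrt (vol * ((K:ℝ) * T ^ 2 / Nt))
      + (m⁻¹ * Real.sqrt vol) * (Real.sqrt B * (Ns:ℝ) ^ (-(1/4:ℝ)))
      ≤ m⁻¹ * (Real.sqrt (vol * (K:ℝ) * T ^ 2) + Real.sqrt vol * Real.sqrt B)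
        * ((Ns:ℝ) ^ (-(1/4:ℝ)) + (Nt:ℝ) ^ (-(1/2:ℝ))) := by
    rw [hsplitKT]
    nlinarith [mul_nonneg hA1 hrp1, mul_nonneg hA2 hrp2]
  exact le_trans hmain hnum
end
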